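/- Let p be a prime with p ≡ 1 (mod 4) and let u_p be the Björck sequence of length p. Then u_p is a CAZAC sequence: |u_p[k]| = 1 for all k ∈ ℤ/pℤ, and (1/p) ∑_{k=0}^{p-1} u_p[m+k] · conj(u_p[k]) = 0 for all m ∈ ℤ/pℤ \ {0}. -/

import Mathlib

open scoped BigOperators Classical

noncomputable section

/-- The Legendre symbol modulo `p`, viewed as a complex-valued function on `ZMod p`:
`1` on nonzero quadratic residues, `0` at `0`, `-1` on quadratic nonresidues. -/
def chi (p : ℕ) (k : ZMod p) : ℂ :=
  if k = 0 then 0 else if ∃ m : ZMod p, m ^ 2 = k then 1 else -1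

/-- The Legendre symbol modulo `p`, viewed as an integer-valued function on `ZMod p`. -/
def chiZ (p : ℕ) (k : ZMod p) : ℤ :=
  if k = 0 then 0 else if ∃ m : ZMod p, m ^ 2 = k then 1 else -1

/-- The discrete periodic (narrow band) ambiguity function
`A_p(u)[m,n] = (1/p) ∑_k u[k+m] conj(u[k]) e^{-2πi k n/p}`. -/
def ambig (p : ℕ) [NeZero p] (u : ZMod p → ℂ) (m n : ZMod p) : ℂ :=
  (1 / (p : ℂ)) * ∑ k : ZMod p,
    u (k + m) * (starRingEnd ℂ) (u k) *
      Complex.exp (-2 * Real.pi * Complex.I * (k.val : ℂ) * (n.val : ℂ) / (p : ℂ))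

/-- The Kloosterman sum `K[a,b;p] = ∑_{x ∈ (ℤ/pℤ)ˣ} e^{2πi(ax + b x⁻¹)/p}`. -/
def kloost (p : ℕ) [NeZero p] (a b : ℤ) : ℂ :=
  ∑ x : (ZMod p)ˣ,
    Complex.exp (2 * Real.pi * Complex.I *
      ((((a : ZMod p) * (x : ZMod p) + (b : ZMod p) * ((x⁻¹ : (ZMod p)ˣ) : ZMod p)).val : ℂ))
        / (p : ℂ))

/-- The Björck sequence of length `p` for a prime `p ≡ 1 (mod 4)`:
`u[k] = exp(iθχ(k))` with `θ = arccos (1/(1+√p))`. -/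
def bjorck1 (p : ℕ) (k : ZMod p) : ℂ :=
  Complex.exp (Complex.I * (Real.arccos (1 / (1 + Real.sqrt p)) : ℂ) * chi p k)

/-- The Björck sequence of length `p` for a prime `p ≡ 3 (mod 4)`:
`u[k] = exp(iφ)` with `φ = arccos ((1-p)/(1+p))` if `k` is a quadratic nonresidue,
and `u[k] = 1` otherwise. -/
def bjorck3 (p : ℕ) (k : ZMod p) : ℂ :=
  if ∀ m : ZMod p, m ^ 2 ≠ k then
    Complex.exp (Complex.I * (Real.arccos ((1 - (p : ℝ)) / (1 + (p : ℝ))) : ℂ))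
  else 1

end

/-!
Because `χ` takes only the values `0, ±1`, the Björck sequence splits as
`u = cos θ + i sin θ · χ + (1 - cos θ) · δ₀`. The Legendre symbol has mean zero, is even when
`p ≡ 1 (mod 4)`, and has autocorrelation `-1` at every nonzero shift (a Jacobi sum). Expanding,
the autocorrelation of `u` at `m ≠ 0` is `(p - 1) cos² θ + 2 cos θ - 1`, and `cos θ = 1 / (1 + √p)`
is exactly a root of this quadratic.
-/

open Complex ComplexConjugate Finset

theorem sum_add_single_mul_star {G R : Type*} [AddCommGroup G] [Fintype G] [DecidableEq G]
    [CommSemiring R] [StarRing R] (f : G → R) (c : R) {m : G} (hm : m ≠ 0) :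
    ∑ k, (f + Pi.single 0 c : G → R) (m + k) * star ((f + Pi.single 0 c : G → R) k) =
      ∑ k, f (m + k) * star (f k) + f m * star c + c * star (f (-m)) := by
  simp [add_eq_zero_iff_eq_neg', hm, Pi.single_apply, apply_ite star, add_mul, mul_add,
    sum_add_distrib]
  abel

section QuadraticChar

variable {F : Type*} [Field F] [Fintype F] [DecidableEq F]

theorem quadraticChar_sum_mul_add_left (hF : ringChar F ≠ 2) {m : F} (hm : m ≠ 0) :
    ∑ k, quadraticChar F (m + k) * quadraticChar F k = -1 := by
  set χ := quadraticChar F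
  have hJ : jacobiSum χ χ = -χ (-1) := by
    simpa only [(quadraticChar_isQuadratic F).inv] using
      jacobiSum_nontrivial_inv (quadraticChar_ne_one hF)
  have hm2 : χ m ^ 2 = 1 := quadraticChar_sq_one hm
  have hneg : χ (-1) ^ 2 = 1 := quadraticChar_sq_one (neg_ne_zero.2 one_ne_zero)
  -- substituting `k = -m x` turns the sum into `χ (-1) * J(χ, χ)`
  calc ∑ k, χ (m + k) * χ k = ∑ x, χ (m + -m * x) * χ (-m * x) :=
        (Fintype.sum_equiv (Equiv.mulLeft₀ (-m) (neg_ne_zero.2 hm)) _ _ fun _ => rfl).symm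
    _ = ∑ x, χ (-1) * (χ x * χ (1 - x)) := by
        refine Fintype.sum_congr _ _ fun x => ?_
        rw [show m + -m * x = m * (1 - x) by ring, show -m * x = -1 * m * x by ring]
        simp only [map_mul]
        linear_combination χ (-1) * χ x * χ (1 - x) * hm2
    _ = -1 := by
        rw [← mul_sum, ← jacobiSum, hJ]
        linear_combination -hneg

theorem sum_const_add_quadraticChar_mul_star {R : Type*} [CommRing R] [StarRing R]
    (hF : ringChar F ≠ 2) (a b : R) {m : F} (hm : m ≠ 0) :
    ∑ k, (a + b * quadraticChar F (m + k)) * star (a + b * quadraticChar F k) =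
      Fintype.card F * (a * star a) - b * star b := by
  have hsum : ∑ k, (quadraticChar F k : R) = 0 := by
    rw [← Int.cast_sum, quadraticChar_sum_zero hF, Int.cast_zero]
  have hsum_shift : ∑ k, (quadraticChar F (m + k) : R) = 0 :=
    (Fintype.sum_equiv (Equiv.addLeft m) _ _ fun _ => rfl).trans hsum
  have hcorr : ∑ k, (quadraticChar F (m + k) : R) * quadraticChar F k = -1 := by
    simpa using congrArg (Int.cast : ℤ → R) (quadraticChar_sum_mul_add_left hF hm)
  have hexpand : ∀ k, (a + b * quadraticChar F (m + k)) * star (a + b * quadraticChar F k) =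
      a * star a + b * star a * quadraticChar F (m + k) + a * star b * quadraticChar F k +
        b * star b * (quadraticChar F (m + k) * quadraticChar F k) := fun k => by
    simp only [star_add, star_mul, star_intCast]; ring
  simp only [hexpand, sum_add_distrib, ← mul_sum, hsum, hsum_shift, hcorr, sum_const, card_univ,
    nsmul_eq_mul]
  ring

theorem exp_I_mul_quadraticChar (θ : ℝ) :
    (fun k : F => exp (I * θ * quadraticChar F k)) =
      (fun k : F => (Real.cos θ : ℂ) + I * Real.sin θ * quadraticChar F k) +
        Pi.single 0 (1 - Real.cos θ : ℂ) := by
  funext k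
  by_cases hk : k = 0
  · simp [hk]
  rcases quadraticChar_dichotomy hk with h | h <;>
    simp only [Pi.add_apply, Pi.single_eq_of_ne hk, add_zero, h] <;> push_cast
  · rw [show I * θ * 1 = θ * I by ring, exp_mul_I]; ring
  · rw [show I * θ * -1 = -θ * I by ring, exp_mul_I, cos_neg, sin_neg]; ring

theorem sum_exp_I_mul_quadraticChar_mul_conj (hF : ringChar F ≠ 2)
    (hF1 : quadraticChar F (-1) = 1) (θ : ℝ) {m : F} (hm : m ≠ 0) :
    ∑ k, exp (I * θ * quadraticChar F (m + k)) * conj (exp (I * θ * quadraticChar F k)) =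
      ((Fintype.card F - 1) * Real.cos θ ^ 2 + 2 * Real.cos θ - 1 : ℝ) := by
  have heven : quadraticChar F (-m) = quadraticChar F m := by
    rw [neg_eq_neg_one_mul, map_mul, hF1, one_mul]
  simp only [congrFun (exp_I_mul_quadraticChar θ), starRingEnd_apply]
  rw [sum_add_single_mul_star _ _ hm, sum_const_add_quadraticChar_mul_star hF _ _ hm, heven]
  have hpyth : (Real.sin θ : ℂ) ^ 2 + Real.cos θ ^ 2 = 1 := by
    exact_mod_cast Real.sin_sq_add_cos_sq θ
  simp only [← starRingEnd_apply, map_add, map_sub, map_mul, map_one, map_intCast, conj_ofReal,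
    conj_I]
  push_cast at hpyth ⊢
  linear_combination (-1 : ℂ) * hpyth + sin (θ : ℂ) ^ 2 * I_sq

end QuadraticChar

theorem one_div_one_add_sqrt_isRoot {x : ℝ} (hx : 0 ≤ x) :
    (x - 1) * (1 / (1 + √x)) ^ 2 + 2 * (1 / (1 + √x)) - 1 = 0 := by
  have hsq : √x ^ 2 = x := Real.sq_sqrt hx
  field_simp
  linear_combination -hsq

theorem cos_arccos_one_div_one_add_sqrt (x : ℝ) :
    Real.cos (Real.arccos (1 / (1 + √x))) = 1 / (1 + √x) :=
  Real.cos_arccos (by linarith [show 0 ≤ 1 / (1 + √x) by positivity])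
    (div_le_one_of_le₀ (by linarith [Real.sqrt_nonneg x]) (by positivity))

theorem chi_eq_quadraticChar (p : ℕ) [Fact p.Prime] (k : ZMod p) :
    chi p k = quadraticChar (ZMod p) k := by
  have hsq : (∃ m : ZMod p, m ^ 2 = k) ↔ IsSquare k := by
    simp only [IsSquare, sq, eq_comm]
  rw [chi, quadraticChar_apply, quadraticCharFun, hsq]
  split_ifs <;> simp

theorem bjorck1_eq_exp (p : ℕ) [Fact p.Prime] (k : ZMod p) :
    bjorck1 p k = exp (I * Real.arccos (1 / (1 + √p)) * quadraticChar (ZMod p) k) := by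
  rw [bjorck1, chi_eq_quadraticChar]

theorem bjorck1_cazac (p : ℕ) [hp : Fact p.Prime] (hp4 : p % 4 = 1) :
    (∀ k : ZMod p, ‖bjorck1 p k‖ = 1) ∧
      ∀ m : ZMod p, m ≠ 0 →
        (1 / (p : ℂ)) *
          ∑ k : ZMod p, bjorck1 p (m + k) * (starRingEnd ℂ) (bjorck1 p k) = 0 := by
  have hF : ringChar (ZMod p) ≠ 2 := by
    rw [ZMod.ringChar_zmod_n]; omega
  have hF1 : quadraticChar (ZMod p) (-1) = 1 := by
    rw [quadraticChar_neg_one hF, ZMod.card]; exact ZMod.χ₄_nat_one_mod_four hp4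
  refine ⟨fun k => ?_, fun m hm => ?_⟩
  · rw [bjorck1_eq_exp]
    simp [norm_exp]
  · simp only [bjorck1_eq_exp]
    rw [sum_exp_I_mul_quadraticChar_mul_conj hF hF1 _ hm, ZMod.card,
      cos_arccos_one_div_one_add_sqrt, one_div_one_add_sqrt_isRoot (Nat.cast_nonneg p)]
    simp
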